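/- arXiv:1812.07557 — 2 statements merged into one kernel-verified Lean document; each statement's English description precedes it below -/
import Mathlib

section
/- The matrix C = (c_{i,j}) defined by c_{i,1} = 1/(i+1) for all i ≥ 1 and c_{i-1,j} = (j/i) c_{i,j-1} for all i, j > 1 is symmetric, i.e., c_{i,j} = c_{j,i} for all i, j ≥ 1. -/
/-!
`i! j! / (i + j)!` satisfies both the initial column and the recurrence, and the recurrence
determines column `j` from column `j - 1`; so by induction on `j`, `c (i, j) = i! j! / (i + j)!`,
which is visibly symmetric in `i` and `j`.
-/

open Nat

def factorialQuotient (i j : ℕ) : ℚ := (i ! * j ! : ℚ) / (i + j)!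

lemma factorialQuotient_comm (i j : ℕ) : factorialQuotient i j = factorialQuotient j i := by
  rw [factorialQuotient, factorialQuotient, mul_comm, add_comm]

lemma factorialQuotient_one_right (i : ℕ) : factorialQuotient i 1 = 1 / (i + 1) := by
  rw [factorialQuotient, factorial_one, factorial_succ]
  push_cast
  field_simp

lemma factorialQuotient_succ_right (i j : ℕ) :
    factorialQuotient i (j + 1) = (j + 1) / (i + 1) * factorialQuotient (i + 1) j := by
  rw [factorialQuotient, factorialQuotient, show i + (j + 1) = i + 1 + j by ring,
    factorial_succ i, factorial_succ j]
  push_cast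
  field_simp

theorem eq_factorialQuotient (c : ℕ+ × ℕ+ → ℚ)
    (h1 : ∀ i : ℕ+, c (i, 1) = 1 / ((i : ℚ) + 1))
    (h2 : ∀ i j : ℕ+, 1 < i → 1 < j → c (i - 1, j) = ((j : ℚ) / (i : ℚ)) * c (i, j - 1))
    (i j : ℕ+) : c (i, j) = factorialQuotient i j := by
  induction j using PNat.recOn generalizing i with
  | one => rw [h1, PNat.one_coe, factorialQuotient_one_right]
  | succ j ih =>
    have step := h2 (i + 1) (j + 1) (lt_add_of_pos_left 1 i.pos) (lt_add_of_pos_left 1 j.pos)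
    rw [PNat.add_sub, PNat.add_sub] at step
    rw [step, ih, PNat.add_coe, PNat.add_coe, PNat.one_coe, factorialQuotient_succ_right]
    push_cast
    rfl

/-- The matrix C defined by c_{i,1} = 1/(i+1) for i ≥ 1 and
c_{i-1,j} = (j/i) c_{i,j-1} for i, j > 1 is symmetric. -/
theorem stmt_0 (c : ℕ+ × ℕ+ → ℚ)
    (h1 : ∀ i : ℕ+, c (i, 1) = 1 / ((i : ℚ) + 1))
    (h2 : ∀ i j : ℕ+, 1 < i → 1 < j → c (i - 1, j) = ((j : ℚ) / (i : ℚ)) * c (i, j - 1)) :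
    ∀ i j : ℕ+, c (i, j) = c (j, i) := by
  intro i j
  rw [eq_factorialQuotient c h1 h2, eq_factorialQuotient c h1 h2, factorialQuotient_comm]
end

section
/- For the matrix C defined by c_{i,1} = 1/(i+1) and c_{i-1,j} = (j/i) c_{i,j-1}, one has c_{j+k,j} = [(j+k)(j+k-1)⋯(j+1) / ((j+1)(j+2)⋯(j+k))] · c_{j,j+k} for every j ≥ 1 and k ≥ 0. -/
private lemma prod_eq (j : ℚ) : ∀ k : ℕ,
    (∏ s ∈ Finset.range k, (j + (k : ℚ) - (s : ℚ)))
      = ∏ s ∈ Finset.range k, (j + (s : ℚ) + 1) := by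
  intro k
  induction k with
  | zero => simp
  | succ k ih =>
    rw [Finset.prod_range_succ' (fun s => j + ((k+1 : ℕ) : ℚ) - (s : ℚ)),
      Finset.prod_range_succ]
    have : (∏ s ∈ Finset.range k, (j + ((k+1:ℕ) : ℚ) - ((s+1 : ℕ) : ℚ)))
        = ∏ s ∈ Finset.range k, (j + (k : ℚ) - (s : ℚ)) := by
      apply Finset.prod_congr rfl
      intro s _
      push_cast
      ring
    rw [this, ih]
    push_cast
    ring

private lemma key (c : ℕ+ × ℕ+ → ℚ)
    (h1 : ∀ i : ℕ+, c (i, 1) = 1 / ((i : ℚ) + 1))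
    (h2 : ∀ i j : ℕ+, 1 < i → 1 < j → c (i - 1, j) = ((j : ℚ) / (i : ℚ)) * c (i, j - 1)) :
    ∀ (n : ℕ) (i : ℕ+), c (i, ⟨n+1, n.succ_pos⟩)
      = (Nat.factorial (i : ℕ) : ℚ) * (Nat.factorial (n+1) : ℚ)
          / (Nat.factorial ((i : ℕ) + n + 1) : ℚ) := by
  intro n
  induction n with
  | zero =>
    intro i
    have h0 : (⟨1, Nat.succ_pos 0⟩ : ℕ+) = 1 := rfl
    have hi : ((i:ℕ) : ℚ) + 1 ≠ 0 := by positivity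
    have hf : ((Nat.factorial (i:ℕ) : ℚ)) ≠ 0 := by
      exact_mod_cast Nat.factorial_ne_zero _
    show c (i, (1 : ℕ+)) = _
    rw [h1 i, show (i:ℕ)+0+1 = (i:ℕ)+1 from rfl,
      Nat.factorial_succ ((i:ℕ)), show Nat.factorial (0+1) = 1 from rfl]
    push_cast
    field_simp
  | succ n ih =>
    intro i
    obtain ⟨N2, hN2⟩ : ∃ N : ℕ+, (N:ℕ) = n + 2 := ⟨⟨n+2, (n+1).succ_pos⟩, rfl⟩
    have hN2' : (⟨n+2, (n+1).succ_pos⟩ : ℕ+) = N2 := PNat.coe_injective (by simp [hN2])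
    rw [hN2']
    have e1 : i + 1 - 1 = i := by
      apply PNat.coe_injective
      rw [PNat.sub_coe]
      simp [PNat.lt_add_one_iff]
    have hlt2 : (1 : ℕ+) < N2 := by
      rw [← PNat.coe_lt_coe, hN2, PNat.one_coe]; omega
    have e2 : N2 - 1 = (⟨n+1, n.succ_pos⟩ : ℕ+) := by
      apply PNat.coe_injective
      rw [PNat.sub_coe]
      simp [hlt2, hN2]
    have hlt1 : (1 : ℕ+) < i + 1 := by
      rw [← PNat.coe_lt_coe, PNat.add_coe, PNat.one_coe]
      have := i.pos; omega
    have h := h2 (i+1) N2 hlt1 hlt2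
    rw [e1, e2] at h
    rw [h, ih (i+1)]
    simp only [PNat.mk_coe, PNat.add_coe, PNat.one_coe, hN2]
    have hA : ((i:ℕ):ℚ) + 1 ≠ 0 := by positivity
    have hf1 : ((Nat.factorial ((i:ℕ)+(n+1)+1) : ℚ)) ≠ 0 := by
      exact_mod_cast Nat.factorial_ne_zero _
    rw [show (i:ℕ)+1+n+1 = (i:ℕ)+(n+1)+1 from by omega,
      Nat.factorial_succ ((i:ℕ)), Nat.factorial_succ (n+1)]
    push_cast
    field_simp
    ring

/-- For the matrix C defined by c_{i,1} = 1/(i+1) and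
c_{i-1,j} = (j/i) c_{i,j-1}, one has
c_{j+k,j} = [(j+k)(j+k-1)⋯(j+1) / ((j+1)(j+2)⋯(j+k))] · c_{j,j+k}
for every j ≥ 1 and k ≥ 0. -/
theorem stmt_2 (c : ℕ+ × ℕ+ → ℚ)
    (h1 : ∀ i : ℕ+, c (i, 1) = 1 / ((i : ℚ) + 1))
    (h2 : ∀ i j : ℕ+, 1 < i → 1 < j → c (i - 1, j) = ((j : ℚ) / (i : ℚ)) * c (i, j - 1)) :
    ∀ (j : ℕ+) (k : ℕ),
      c ((⟨(j : ℕ) + k, Nat.add_pos_left j.pos k⟩ : ℕ+), j)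
        = ((∏ s ∈ Finset.range k, ((j : ℚ) + (k : ℚ) - (s : ℚ)))
            / (∏ s ∈ Finset.range k, ((j : ℚ) + (s : ℚ) + 1)))
          * c (j, (⟨(j : ℕ) + k, Nat.add_pos_left j.pos k⟩ : ℕ+)) := by
  intro j k
  have hprod := prod_eq ((j:ℚ)) k
  have hne : (∏ s ∈ Finset.range k, ((j : ℚ) + (s : ℚ) + 1)) ≠ 0 := by
    apply Finset.prod_ne_zero_iff.mpr
    intro s _
    positivity
  rw [hprod, div_self hne, one_mul]
  -- use closed form
  set A : ℕ+ := (⟨(j : ℕ) + k, Nat.add_pos_left j.pos k⟩ : ℕ+) with hA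
  obtain ⟨m, hm⟩ : ∃ m, (j:ℕ) = m + 1 := ⟨(j:ℕ) - 1, by have := j.pos; omega⟩
  have hj : j = ⟨m+1, m.succ_pos⟩ := by apply PNat.coe_injective; simpa using hm
  have hA' : A = ⟨(m+k)+1, (m+k).succ_pos⟩ := by
    apply PNat.coe_injective; simp [hA, hm]; omega
  rw [hj, hA']
  erw [key c h1 h2, key c h1 h2]
  simp only [PNat.mk_coe]
  rw [show (m+1) + (m+k) + 1 = (m+k+1) + m + 1 from by omega]
  ring
end
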